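/- Let η be a probability measure on [0,1), let D_n denote the level-n dyadic partition, and let H(·,·) denote Shannon entropy. For every m, n ∈ ℕ: (1/n) H(η, D_n) = E_{1≤i≤n}[(1/m) H(η_{x,i}, D_{i+m})] + O(m/n), where η_{x,i} is the conditional measure of η on the dyadic cell D_i(x), the expectation is over i uniform in {1,…,n} and x ∼ η, and the implied constant is absolute. -/

import Mathlib

/-!
Conditioning on the level-`i` cell, the chain rule for entropy gives
`E_x H(η_{x,i}, D_{i+m}) = H(η, D_{i+m}) - H(η, D_i)`, and this increment lies in `[0, m]`
because every cell splits into `2^m` subcells. Averaging the increments over `1 ≤ i ≤ n`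
telescopes to `(1/m) ∑_{j=1}^m (H(η, D_{n+j}) - H(η, D_j))`, and each summand differs from
`H(η, D_n)` by at most `m`.
-/

open MeasureTheory

/-- `ent p = -p log₂ p`, the entropy summand (base-2 logarithm). -/
noncomputable def ent (p : ℝ) : ℝ := -(p * Real.logb 2 p)

/-- The level-`i` dyadic cell `[k/2^i, (k+1)/2^i)`. -/
noncomputable def dcell (i k : ℕ) : Set ℝ :=
  Set.Ico ((k : ℝ) / 2 ^ i) (((k : ℝ) + 1) / 2 ^ i)

/-- Shannon entropy of `μ` with respect to the level-`i` dyadic partition of `[0,1)`. -/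
noncomputable def Hdy (μ : Measure ℝ) (i : ℕ) : ℝ :=
  ∑ k ∈ Finset.range (2 ^ i), ent ((μ (dcell i k)).toReal)

/-- The level-`i` dyadic cell containing `x ∈ [0,1)`. -/
noncomputable def cellOf (i : ℕ) (x : ℝ) : Set ℝ :=
  Set.Ico ((⌊x * 2 ^ i⌋ : ℝ) / 2 ^ i) (((⌊x * 2 ^ i⌋ : ℝ) + 1) / 2 ^ i)

/-- The level-`i` component of `μ` at `x`: the conditional measure on `D_i(x)`. -/
noncomputable def comp (μ : Measure ℝ) (i : ℕ) (x : ℝ) : Measure ℝ :=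
  (μ (cellOf i x))⁻¹ • μ.restrict (cellOf i x)

open Finset Real

section Entropy

variable {ι : Type*} {s : Finset ι}

lemma ent_eq_negMulLog_div (p : ℝ) : ent p = negMulLog p / log 2 := by
  simp only [ent, negMulLog, logb]
  ring

lemma ent_nonneg {p : ℝ} (h0 : 0 ≤ p) (h1 : p ≤ 1) : 0 ≤ ent p := by
  rw [ent_eq_negMulLog_div]
  exact div_nonneg (negMulLog_nonneg h0 h1) (log_nonneg one_le_two)

lemma sum_negMulLog_le_log_card {a : ι → ℝ} (h0 : ∀ i ∈ s, 0 ≤ a i) (h1 : ∑ i ∈ s, a i = 1) :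
    ∑ i ∈ s, negMulLog (a i) ≤ log #s := by
  have hs : s.Nonempty := nonempty_of_sum_ne_zero (h1 ▸ one_ne_zero)
  have hcard : (0 : ℝ) < #s := by exact_mod_cast hs.card_pos
  have jensen := concaveOn_negMulLog.le_map_sum (t := s) (w := fun _ ↦ (#s : ℝ)⁻¹) (p := a)
    (fun _ _ ↦ by positivity) (by simp [hcard.ne']) h0
  simp only [smul_eq_mul, ← mul_sum, h1, mul_one] at jensen
  rw [negMulLog, log_inv] at jensen
  nlinarith [mul_inv_cancel₀ hcard.ne']

lemma sum_ent_le_logb_card {a : ι → ℝ} (h0 : ∀ i ∈ s, 0 ≤ a i) (h1 : ∑ i ∈ s, a i = 1) :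
    ∑ i ∈ s, ent (a i) ≤ logb 2 #s := by
  simp only [ent_eq_negMulLog_div, ← sum_div, logb]
  exact div_le_div_of_nonneg_right (sum_negMulLog_le_log_card h0 h1) (log_nonneg one_le_two)

variable {q : ι → ℝ}

lemma sum_ent_div_sum_nonneg (hq : ∀ i ∈ s, 0 ≤ q i) :
    0 ≤ ∑ i ∈ s, ent (q i / ∑ j ∈ s, q j) :=
  sum_nonneg fun i hi ↦ ent_nonneg (div_nonneg (hq i hi) (sum_nonneg hq))
    (div_le_one_of_le₀ (single_le_sum hq hi) (sum_nonneg hq))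

lemma sum_ent_div_sum_le (hq : ∀ i ∈ s, 0 ≤ q i) :
    ∑ i ∈ s, ent (q i / ∑ j ∈ s, q j) ≤ logb 2 #s := by
  by_cases h : ∑ j ∈ s, q j = 0
  · simpa [h, ent, logb] using div_nonneg (log_natCast_nonneg #s) (log_nonneg one_le_two)
  · refine sum_ent_le_logb_card (fun i hi ↦ div_nonneg (hq i hi) (sum_nonneg hq)) ?_
    rw [← sum_div, div_self h]

lemma sum_mul_sum_ent_div_sum (hq : ∀ i ∈ s, 0 ≤ q i) :
    (∑ j ∈ s, q j) * ∑ i ∈ s, ent (q i / ∑ j ∈ s, q j)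
      = ∑ i ∈ s, ent (q i) - ent (∑ j ∈ s, q j) := by
  set p := ∑ j ∈ s, q j
  by_cases hp : p = 0
  · have hzero : ∀ i ∈ s, q i = 0 := (sum_eq_zero_iff_of_nonneg hq).mp hp
    have hent : ∑ i ∈ s, ent (q i) = 0 :=
      sum_eq_zero fun i hi ↦ by rw [hzero i hi, ent, zero_mul, neg_zero]
    rw [hp, hent, zero_mul, ent, zero_mul, neg_zero, sub_zero]
  · have hterm : ∀ i ∈ s, p * ent (q i / p) = ent (q i) + q i * logb 2 p := fun i _ ↦ by
      by_cases hqi : q i = 0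
      · simp [hqi, ent]
      · rw [ent, ent, logb_div hqi hp]
        field_simp
        ring
    rw [mul_sum, sum_congr rfl hterm, sum_add_distrib, ← sum_mul, ent]
    ring

end Entropy

section DyadicCells

lemma mem_dcell_iff {i k : ℕ} {x : ℝ} : x ∈ dcell i k ↔ ⌊x * 2 ^ i⌋ = k := by
  rw [dcell, Set.mem_Ico, div_le_iff₀ (by positivity), lt_div_iff₀ (by positivity),
    Int.floor_eq_iff]
  push_cast
  rfl

lemma floor_mul_two_pow_add_ediv (x : ℝ) (i m : ℕ) :
    ⌊x * 2 ^ (i + m)⌋ / 2 ^ m = ⌊x * 2 ^ i⌋ := by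
  have h := Int.floor_div_natCast (x * 2 ^ (i + m)) (2 ^ m)
  push_cast at h
  rw [← h, pow_add, ← mul_assoc, mul_div_cancel_right₀ _ (by positivity)]

lemma mem_dcell_iff_exists_mem_dcell_add {i k : ℕ} (m : ℕ) {x : ℝ} :
    x ∈ dcell i k ↔ ∃ r < 2 ^ m, x ∈ dcell (i + m) (k * 2 ^ m + r) := by
  simp only [mem_dcell_iff, ← floor_mul_two_pow_add_ediv x i m,
    Int.ediv_eq_iff_of_pos (by positivity : (0 : ℤ) < 2 ^ m)]
  generalize ⌊x * 2 ^ (i + m)⌋ = L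
  have hcast : ((2 ^ m : ℕ) : ℤ) = 2 ^ m := by push_cast; rfl
  rw [← hcast]
  generalize 2 ^ m = d
  constructor
  · rintro ⟨h1, h2⟩
    exact ⟨(L - k * d).toNat, by omega, by push_cast; omega⟩
  · rintro ⟨r, hr, rfl⟩
    push_cast
    omega

lemma dcell_eq_biUnion (i m k : ℕ) :
    dcell i k = ⋃ r ∈ range (2 ^ m), dcell (i + m) (k * 2 ^ m + r) := by
  ext x
  rw [mem_dcell_iff_exists_mem_dcell_add m]
  simp only [Set.mem_iUnion, mem_range, exists_prop]

lemma dcell_add_subset {i m r : ℕ} (k : ℕ) (hr : r < 2 ^ m) :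
    dcell (i + m) (k * 2 ^ m + r) ⊆ dcell i k :=
  fun _ hx ↦ (mem_dcell_iff_exists_mem_dcell_add m).mpr ⟨r, hr, hx⟩

lemma measurableSet_dcell (i k : ℕ) : MeasurableSet (dcell i k) := measurableSet_Ico

lemma dcell_zero_zero : dcell 0 0 = Set.Ico 0 1 := by simp [dcell]

lemma Ico_zero_one_eq_biUnion_dcell (i : ℕ) :
    Set.Ico (0 : ℝ) 1 = ⋃ k ∈ range (2 ^ i), dcell i k := by
  simpa [dcell_zero_zero] using dcell_eq_biUnion 0 i 0

lemma dcell_disjoint {i k l : ℕ} (h : k ≠ l) : Disjoint (dcell i k) (dcell i l) :=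
  Set.disjoint_left.mpr fun x hk hl ↦ h (by
    rw [mem_dcell_iff] at hk hl
    exact_mod_cast hk.symm.trans hl)

lemma cellOf_eq_dcell {i k : ℕ} {x : ℝ} (hx : x ∈ dcell i k) : cellOf i x = dcell i k := by
  rw [cellOf, mem_dcell_iff.mp hx, dcell]
  push_cast
  rfl

end DyadicCells

lemma Finset.sum_range_mul_eq_sum_sum {M : Type*} [AddCommMonoid M] (f : ℕ → M) (a b : ℕ) :
    ∑ l ∈ range (a * b), f l = ∑ k ∈ range a, ∑ r ∈ range b, f (k * b + r) := by
  induction a with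
  | zero => simp
  | succ a ih => rw [sum_range_succ, ← ih, Nat.succ_mul, sum_range_add]

section DyadicEntropy

variable (μ : Measure ℝ)

lemma Hdy_eq_sum_measureReal (i : ℕ) :
    Hdy μ i = ∑ k ∈ range (2 ^ i), ent (μ.real (dcell i k)) :=
  rfl

lemma Hdy_add_eq_sum_sum (i m : ℕ) :
    Hdy μ (i + m) = ∑ k ∈ range (2 ^ i), ∑ r ∈ range (2 ^ m),
      ent (μ.real (dcell (i + m) (k * 2 ^ m + r))) := by
  rw [Hdy_eq_sum_measureReal, pow_add, sum_range_mul_eq_sum_sum]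

noncomputable def cellEntropy (i m k : ℕ) : ℝ :=
  ∑ r ∈ range (2 ^ m), ent (μ.real (dcell (i + m) (k * 2 ^ m + r)) / μ.real (dcell i k))

lemma measureReal_comp {i k : ℕ} {x : ℝ} (hx : x ∈ dcell i k) {A : Set ℝ}
    (hA : MeasurableSet A) :
    (comp μ i x).real A = μ.real (A ∩ dcell i k) / μ.real (dcell i k) := by
  simp [comp, cellOf_eq_dcell hx, Measure.real, Measure.restrict_apply hA, div_eq_inv_mul]

lemma Hdy_comp_eq_cellEntropy {i k : ℕ} (m : ℕ) (hk : k < 2 ^ i) {x : ℝ} (hx : x ∈ dcell i k) :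
    Hdy (comp μ i x) (i + m) = cellEntropy μ i m k := by
  rw [Hdy_add_eq_sum_sum, sum_eq_single_of_mem k (mem_range.mpr hk)]
  · refine sum_congr rfl fun r hr ↦ ?_
    rw [measureReal_comp μ hx (measurableSet_dcell _ _),
      Set.inter_eq_left.mpr (dcell_add_subset k (mem_range.mp hr))]
  · refine fun l _ hlk ↦ sum_eq_zero fun r hr ↦ ?_
    have hdisj : dcell (i + m) (l * 2 ^ m + r) ∩ dcell i k = ∅ :=
      Set.disjoint_iff_inter_eq_empty.mp
        ((dcell_disjoint hlk).mono_left (dcell_add_subset l (mem_range.mp hr)))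
    rw [measureReal_comp μ hx (measurableSet_dcell _ _), hdisj]
    simp [ent]

variable [IsFiniteMeasure μ]

lemma measureReal_dcell_eq_sum (i m k : ℕ) :
    μ.real (dcell i k) = ∑ r ∈ range (2 ^ m), μ.real (dcell (i + m) (k * 2 ^ m + r)) := by
  rw [dcell_eq_biUnion i m k]
  exact measureReal_biUnion_finset (fun r _ s _ hrs ↦ dcell_disjoint (by omega))
    (fun _ _ ↦ measurableSet_dcell _ _)

lemma sum_measureReal_dcell (i : ℕ) :
    ∑ k ∈ range (2 ^ i), μ.real (dcell i k) = μ.real (Set.Ico 0 1) := by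
  rw [← dcell_zero_zero, measureReal_dcell_eq_sum μ 0 i 0]
  simp only [zero_add, zero_mul]

lemma cellEntropy_eq (i m k : ℕ) :
    cellEntropy μ i m k = ∑ r ∈ range (2 ^ m), ent (μ.real (dcell (i + m) (k * 2 ^ m + r)) /
      ∑ s ∈ range (2 ^ m), μ.real (dcell (i + m) (k * 2 ^ m + s))) := by
  rw [cellEntropy, ← measureReal_dcell_eq_sum]

lemma cellEntropy_nonneg (i m k : ℕ) : 0 ≤ cellEntropy μ i m k := by
  rw [cellEntropy_eq]
  exact sum_ent_div_sum_nonneg fun _ _ ↦ measureReal_nonneg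

lemma cellEntropy_le (i m k : ℕ) : cellEntropy μ i m k ≤ m := by
  rw [cellEntropy_eq]
  calc _ ≤ logb 2 #(range (2 ^ m)) := sum_ent_div_sum_le fun _ _ ↦ measureReal_nonneg
    _ = m := by simp [logb_pow]

lemma sum_measureReal_mul_cellEntropy (i m : ℕ) :
    ∑ k ∈ range (2 ^ i), μ.real (dcell i k) * cellEntropy μ i m k = Hdy μ (i + m) - Hdy μ i := by
  have hcell : ∀ k ∈ range (2 ^ i), μ.real (dcell i k) * cellEntropy μ i m k
      = ∑ r ∈ range (2 ^ m), ent (μ.real (dcell (i + m) (k * 2 ^ m + r)))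
        - ent (μ.real (dcell i k)) := fun k _ ↦ by
    rw [cellEntropy_eq, measureReal_dcell_eq_sum μ i m k]
    exact sum_mul_sum_ent_div_sum fun _ _ ↦ measureReal_nonneg
  rw [sum_congr rfl hcell, sum_sub_distrib, Hdy_add_eq_sum_sum, Hdy_eq_sum_measureReal]

lemma Hdy_le_Hdy_add (i m : ℕ) : Hdy μ i ≤ Hdy μ (i + m) := by
  rw [← sub_nonneg, ← sum_measureReal_mul_cellEntropy]
  exact sum_nonneg fun k _ ↦ mul_nonneg measureReal_nonneg (cellEntropy_nonneg μ i m k)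

end DyadicEntropy

lemma Finset.sum_Icc_one_eq_sum_range {M : Type*} [AddCommMonoid M] (f : ℕ → M) (n : ℕ) :
    ∑ i ∈ Icc 1 n, f i = ∑ i ∈ range n, f (i + 1) := by
  rw [← Ico_add_one_right_eq_Icc, sum_Ico_eq_sum_range, Nat.add_sub_cancel]
  simp only [add_comm]

lemma Finset.sum_range_sub_shift {M : Type*} [AddCommGroup M] (v : ℕ → M) (n m : ℕ) :
    ∑ i ∈ range n, (v (i + m) - v i) = ∑ i ∈ range m, (v (n + i) - v i) := by
  have h1 := sum_range_add v m n
  have h2 := sum_range_add v n m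
  rw [add_comm m n] at h1
  simp only [sum_sub_distrib, add_comm _ m]
  rw [sub_eq_sub_iff_add_eq_add, add_comm, ← h1, h2, add_comm]

lemma abs_sub_one_div_mul_sum_Icc_le (u : ℕ → ℝ) (h0 : u 0 = 0) (hmono : ∀ i k, u i ≤ u (i + k))
    (hlip : ∀ i k, u (i + k) ≤ u i + k) {m : ℕ} (hm : 0 < m) (n : ℕ) :
    |u n - (1 / m : ℝ) * ∑ i ∈ Icc 1 n, (u (i + m) - u i)| ≤ m := by
  set S := ∑ i ∈ Icc 1 n, (u (i + m) - u i)
  have hS : S = ∑ j ∈ range m, (u (n + (j + 1)) - u (j + 1)) := by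
    simp only [S, sum_Icc_one_eq_sum_range, ← add_assoc, add_right_comm _ 1 m]
    exact sum_range_sub_shift (fun i ↦ u (i + 1)) n m
  have hterm : ∀ j ∈ range m, |u (n + (j + 1)) - u (j + 1) - u n| ≤ m := fun j hj ↦ by
    have hj : ((j + 1 : ℕ) : ℝ) ≤ m := by exact_mod_cast mem_range.mp hj
    have h1 := hmono n (j + 1)
    have h2 := hlip n (j + 1)
    have h3 := hmono 0 (j + 1)
    have h4 := hlip 0 (j + 1)
    simp only [zero_add, h0] at h3 h4
    rw [abs_le]
    constructor <;> linarith
  have hdev : |S - m * u n| ≤ m * m :=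
    calc |S - m * u n| = |∑ j ∈ range m, (u (n + (j + 1)) - u (j + 1) - u n)| := by
          rw [hS, sum_sub_distrib (g := fun _ ↦ u n), sum_const, card_range, nsmul_eq_mul]
      _ ≤ ∑ j ∈ range m, |u (n + (j + 1)) - u (j + 1) - u n| := abs_sum_le_sum_abs _ _
      _ ≤ ∑ _j ∈ range m, (m : ℝ) := sum_le_sum hterm
      _ = m * m := by rw [sum_const, card_range, nsmul_eq_mul]
  have hm' : (0 : ℝ) < m := by exact_mod_cast hm
  rw [show u n - 1 / m * S = -((S - m * u n) / m) by field_simp; ring, abs_neg, abs_div,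
    abs_of_pos hm', div_le_iff₀ hm']
  exact hdev

section UnitInterval

variable (μ : Measure ℝ)

lemma Hdy_zero (hμ : μ (Set.Ico 0 1) = 1) : Hdy μ 0 = 0 := by
  simp [Hdy_eq_sum_measureReal, dcell_zero_zero, measureReal_def, hμ, ent]

variable [IsFiniteMeasure μ]

lemma Hdy_add_le (hμ : μ (Set.Ico 0 1) = 1) (i m : ℕ) : Hdy μ (i + m) ≤ Hdy μ i + m := by
  rw [← sub_le_iff_le_add', ← sum_measureReal_mul_cellEntropy]
  calc _ ≤ ∑ k ∈ range (2 ^ i), μ.real (dcell i k) * m :=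
        sum_le_sum fun k _ ↦ mul_le_mul_of_nonneg_left (cellEntropy_le μ i m k) measureReal_nonneg
    _ = m := by
        rw [← sum_mul, sum_measureReal_dcell, measureReal_def, hμ, ENNReal.toReal_one, one_mul]

lemma integral_Hdy_comp (hμ : ∀ᵐ x ∂μ, x ∈ Set.Ico 0 1) (i m : ℕ) :
    ∫ x, Hdy (comp μ i x) (i + m) ∂μ = Hdy μ (i + m) - Hdy μ i := by
  have hconst : ∀ k ∈ range (2 ^ i),
      Set.EqOn (fun x ↦ Hdy (comp μ i x) (i + m)) (fun _ ↦ cellEntropy μ i m k) (dcell i k) :=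
    fun k hk _ hx ↦ Hdy_comp_eq_cellEntropy μ m (mem_range.mp hk) hx
  calc ∫ x, Hdy (comp μ i x) (i + m) ∂μ
      = ∫ x in ⋃ k ∈ range (2 ^ i), dcell i k, Hdy (comp μ i x) (i + m) ∂μ := by
        rw [← Ico_zero_one_eq_biUnion_dcell, Measure.restrict_eq_self_of_ae_mem hμ]
    _ = ∑ k ∈ range (2 ^ i), ∫ x in dcell i k, Hdy (comp μ i x) (i + m) ∂μ :=
        integral_biUnion_finset _ (fun k _ ↦ measurableSet_dcell i k)
          (fun _ _ _ _ hkl ↦ dcell_disjoint hkl)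
          (fun k hk ↦ (integrableOn_const (measure_ne_top μ _)).congr_fun (hconst k hk).symm
            (measurableSet_dcell i k))
    _ = ∑ k ∈ range (2 ^ i), μ.real (dcell i k) * cellEntropy μ i m k :=
        sum_congr rfl fun k hk ↦ by
          rw [setIntegral_congr_fun (measurableSet_dcell i k) (hconst k hk), setIntegral_const,
            smul_eq_mul]
    _ = Hdy μ (i + m) - Hdy μ i := sum_measureReal_mul_cellEntropy μ i m

end UnitInterval

theorem multiscale_entropy_formula :
    ∃ C > (0 : ℝ), ∀ (μ : Measure ℝ), IsProbabilityMeasure μ → μ (Set.Ico 0 1) = 1 →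
      ∀ m n : ℕ, 1 ≤ m → 1 ≤ n →
      |(1 / n : ℝ) * Hdy μ n -
          (1 / n : ℝ) * ∑ i ∈ Finset.Icc 1 n, ∫ x, (1 / m : ℝ) * Hdy (comp μ i x) (i + m) ∂μ|
        ≤ C * m / n := by
  refine ⟨1, one_pos, fun μ _ hμ m n hm _ ↦ ?_⟩
  have hae : ∀ᵐ x ∂μ, x ∈ Set.Ico (0 : ℝ) 1 :=
    ae_iff.mpr ((prob_compl_eq_zero_iff measurableSet_Ico).mpr hμ)
  have hint : ∀ i, ∫ x, (1 / m : ℝ) * Hdy (comp μ i x) (i + m) ∂μ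
      = (1 / m : ℝ) * (Hdy μ (i + m) - Hdy μ i) := fun i ↦ by
    rw [integral_const_mul, integral_Hdy_comp μ hae]
  have hmain := abs_sub_one_div_mul_sum_Icc_le (Hdy μ) (Hdy_zero μ hμ) (Hdy_le_Hdy_add μ)
    (Hdy_add_le μ hμ) hm n
  rw [sum_congr rfl fun i _ ↦ hint i, ← mul_sum, ← mul_sub, abs_mul,
    abs_of_nonneg (by positivity : (0 : ℝ) ≤ 1 / n)]
  calc _ ≤ (1 / n : ℝ) * m := mul_le_mul_of_nonneg_left hmain (by positivity)
    _ = 1 * m / n := by ring
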